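/- arXiv:1402.4604 — 3 statements merged into one kernel-verified Lean document; each statement's English description precedes it below -/
import Mathlib

section
/- Let ψ ∈ L¹(ℝ^d) ∩ L²(ℝ^d) and let D be a closed subgroup of GL(d,ℝ) with left Haar measure da. Then for every a ∈ GL(d,ℝ) and every (x,ξ) ∈ ℝ^{2d}, the function q ↦ W_ψ(a^{−1}(x − q), ᵗa ξ) is integrable on ℝ^d with ∫_{ℝ^d} W_ψ(a^{−1}(x − q), ᵗa ξ) dq = |det a| · |ψ̂(ᵗa ξ)|², and consequently, for every (x,ξ) ∈ ℝ^{2d}, ∫_D ( ∫_{ℝ^d} W_ψ(a^{−1}(x − q), ᵗa ξ) dq ) |det a|^{−1} da = ∫_D |ψ̂(ᵗa ξ)|² da, with equality in [0,∞]. In particular, the Wigner admissibility integral of the wavelet group H = ℝ^d ⋊ D coincides with the Calderón admissibility integral ∫_D |ψ̂(ᵗa ξ)|² da. -/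
open MeasureTheory Real Complex Matrix
open scoped ENNReal MatrixGroups

/-- The Wigner distribution `W_f` of a function `f ∈ L²(ℝ^d)`. -/
noncomputable def wigner {d : ℕ} (f : (Fin d → ℝ) → ℂ) (x ξ : Fin d → ℝ) : ℂ :=
  ∫ y : Fin d → ℝ,
    Complex.exp (-2 * Real.pi * Complex.I * ((ξ ⬝ᵥ y : ℝ) : ℂ)) *
      f (x + (2 : ℝ)⁻¹ • y) * (starRingEnd ℂ) (f (x - (2 : ℝ)⁻¹ • y))

/-- The Fourier transform `f̂(ξ) = ∫ f(x) e^{-2πi⟨x,ξ⟩} dx`. -/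
noncomputable def fourierT {d : ℕ} (f : (Fin d → ℝ) → ℂ) (ξ : Fin d → ℝ) : ℂ :=
  ∫ x : Fin d → ℝ, f x * Complex.exp (-2 * Real.pi * Complex.I * ((x ⬝ᵥ ξ : ℝ) : ℂ))

/-!
The substitution `v = x - y/2`, `w = x + y/2` is a measure-preserving change of variables of
`ℝ^d × ℝ^d`, and it turns the Wigner integrand `e^{-2πi⟨η, y⟩} ψ(x + y/2) conj ψ(x - y/2)` into
`conj (ψ(v) e^{-2πi⟨v, η⟩}) · ψ(w) e^{-2πi⟨w, η⟩}`. By Fubini the marginal `∫ W_ψ(x, η) dx`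
therefore factorises as `conj ψ̂(η) · ψ̂(η) = |ψ̂(η)|²`. The affine substitution
`u = a⁻¹(x - q)` contributes the Jacobian `|det a|`, which cancels the factor `|det a|⁻¹` of the
Haar measure of `ℝ^d ⋊ D`.
-/

theorem measurePreserving_sub_half_smul_add_half_smul {E : Type*} [NormedAddCommGroup E]
    [NormedSpace ℝ E] [MeasurableSpace E] [BorelSpace E] [SecondCountableTopology E]
    (μ : Measure E) [SFinite μ] [μ.IsAddLeftInvariant] [μ.IsAddRightInvariant] :
    MeasurePreserving (fun p : E × E => (p.1 - (2 : ℝ)⁻¹ • p.2, p.1 + (2 : ℝ)⁻¹ • p.2))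
      (μ.prod μ) (μ.prod μ) := by
  have hshear : MeasurePreserving (fun p : E × E => (p.1, p.2 - (2 : ℝ)⁻¹ • p.1))
      (μ.prod μ) (μ.prod μ) :=
    (MeasurePreserving.id μ).skew_product (by fun_prop)
      (Filter.Eventually.of_forall fun y => map_sub_right_eq_self μ _)
  have hshear' := (Measure.measurePreserving_swap.comp hshear).comp
    (Measure.measurePreserving_swap (μ := μ) (ν := μ))
  convert (measurePreserving_prod_add μ μ).comp hshear' using 1
  ext p <;> simp only [Function.comp_apply, Prod.swap]
  module

section ChangeOfVariables

variable {E F : Type*} [NormedAddCommGroup E] [NormedSpace ℝ E] [MeasurableSpace E] [BorelSpace E]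
  [FiniteDimensional ℝ E] (μ : Measure E) [μ.IsAddHaarMeasure] [NormedAddCommGroup F]

theorem map_continuousLinearEquiv_addHaar_eq_smul_addHaar (L : E ≃L[ℝ] E) :
    μ.map L = ENNReal.ofReal |LinearMap.det (L : E →ₗ[ℝ] E)|⁻¹ • μ := by
  rw [← abs_inv]
  exact Measure.map_linearMap_addHaar_eq_smul_addHaar μ L.toLinearEquiv.isUnit_det'.ne_zero

theorem integrable_comp_continuousLinearEquiv_iff (L : E ≃L[ℝ] E) {g : E → F} :
    Integrable (fun x => g (L x)) μ ↔ Integrable g μ := by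
  have hL := L.toHomeomorph.measurableEmbedding
  rw [ContinuousLinearEquiv.coe_toHomeomorph] at hL
  rw [← Function.comp_def, ← hL.integrable_map_iff,
    map_continuousLinearEquiv_addHaar_eq_smul_addHaar,
    integrable_smul_measure (by simpa using L.toLinearEquiv.isUnit_det'.ne_zero)
      ENNReal.ofReal_ne_top]

theorem integral_comp_continuousLinearEquiv [NormedSpace ℝ F] (L : E ≃L[ℝ] E) (g : E → F) :
    ∫ x, g (L x) ∂μ = |LinearMap.det (L : E →ₗ[ℝ] E)|⁻¹ • ∫ x, g x ∂μ := by
  have hL := L.toHomeomorph.measurableEmbedding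
  rw [ContinuousLinearEquiv.coe_toHomeomorph] at hL
  rw [← hL.integral_map, map_continuousLinearEquiv_addHaar_eq_smul_addHaar, integral_smul_measure,
    ENNReal.toReal_ofReal (by positivity)]

end ChangeOfVariables

section Matrix
variable {ι F : Type*} [Fintype ι] [DecidableEq ι] [NormedAddCommGroup F]

theorem MeasureTheory.Integrable.comp_inv_mulVec_sub {g : (ι → ℝ) → F} (hg : Integrable g)
    (a : GL ι ℝ) (x : ι → ℝ) :
    Integrable (fun q => g ((↑a⁻¹ : Matrix ι ι ℝ) *ᵥ (x - q))) := by
  let L := (Matrix.GeneralLinearGroup.toLin a⁻¹).toLinearEquiv.toContinuousLinearEquiv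
  exact ((integrable_comp_continuousLinearEquiv_iff volume L).2 hg).comp_sub_left x

theorem integral_comp_inv_mulVec_sub [NormedSpace ℝ F] (g : (ι → ℝ) → F) (a : GL ι ℝ)
    (x : ι → ℝ) :
    ∫ q, g ((↑a⁻¹ : Matrix ι ι ℝ) *ᵥ (x - q)) = |(a : Matrix ι ι ℝ).det| • ∫ u, g u := by
  let L := (Matrix.GeneralLinearGroup.toLin a⁻¹).toLinearEquiv.toContinuousLinearEquiv
  have hdet : LinearMap.det (L : (ι → ℝ) →ₗ[ℝ] (ι → ℝ)) = (a : Matrix ι ι ℝ).det⁻¹ := by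
    change LinearMap.det (Matrix.toLin' (↑a⁻¹ : Matrix ι ι ℝ)) = _
    simp [LinearMap.det_toLin']
  calc ∫ q, g ((↑a⁻¹ : Matrix ι ι ℝ) *ᵥ (x - q)) = ∫ q, g (L q) :=
        integral_sub_left_eq_self (fun q => g (L q)) volume x
    _ = _ := by rw [integral_comp_continuousLinearEquiv, hdet, abs_inv, inv_inv]

end Matrix

theorem MeasureTheory.Integrable.conj_mul_prod {α : Type*} [MeasurableSpace α] {μ : Measure α}
    {g : α → ℂ} (hg : Integrable g μ) :
    Integrable (fun z : α × α => (starRingEnd ℂ) (g z.1) * g z.2) (μ.prod μ) :=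
  (Complex.conjCLE.toContinuousLinearMap.integrable_comp hg).mul_prod hg

section Wigner
variable {d : ℕ}

noncomputable def fourierIntegrand (f : (Fin d → ℝ) → ℂ) (ξ w : Fin d → ℝ) : ℂ :=
  f w * Complex.exp (-2 * Real.pi * Complex.I * ((w ⬝ᵥ ξ : ℝ) : ℂ))

theorem norm_exp_neg_two_pi_I_mul_ofReal (t : ℝ) :
    ‖Complex.exp (-2 * Real.pi * Complex.I * (t : ℂ))‖ = 1 := by
  rw [show -2 * Real.pi * Complex.I * (t : ℂ) = ((-2 * Real.pi * t : ℝ) : ℂ) * Complex.I by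
    push_cast; ring, Complex.norm_exp_ofReal_mul_I]

theorem MeasureTheory.Integrable.fourierIntegrand {f : (Fin d → ℝ) → ℂ}
    (hf : Integrable f) (ξ : Fin d → ℝ) : Integrable (fourierIntegrand f ξ) :=
  hf.mul_bdd (c := 1) (by fun_prop)
    (Filter.Eventually.of_forall fun w => (norm_exp_neg_two_pi_I_mul_ofReal _).le)

noncomputable def wignerIntegrand (f : (Fin d → ℝ) → ℂ) (ξ : Fin d → ℝ)
    (p : (Fin d → ℝ) × (Fin d → ℝ)) : ℂ :=
  Complex.exp (-2 * Real.pi * Complex.I * ((ξ ⬝ᵥ p.2 : ℝ) : ℂ)) *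
    f (p.1 + (2 : ℝ)⁻¹ • p.2) * (starRingEnd ℂ) (f (p.1 - (2 : ℝ)⁻¹ • p.2))

theorem wigner_eq_integral_wignerIntegrand (f : (Fin d → ℝ) → ℂ) (x ξ : Fin d → ℝ) :
    wigner f x ξ = ∫ y, wignerIntegrand f ξ (x, y) :=
  rfl

theorem wignerIntegrand_eq_conj_mul (f : (Fin d → ℝ) → ℂ) (ξ : Fin d → ℝ)
    (p : (Fin d → ℝ) × (Fin d → ℝ)) :
    wignerIntegrand f ξ p =
      (starRingEnd ℂ) (fourierIntegrand f ξ (p.1 - (2 : ℝ)⁻¹ • p.2)) *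
        fourierIntegrand f ξ (p.1 + (2 : ℝ)⁻¹ • p.2) := by
  obtain ⟨x, y⟩ := p
  have hy : ξ ⬝ᵥ y = (x + (2 : ℝ)⁻¹ • y) ⬝ᵥ ξ - (x - (2 : ℝ)⁻¹ • y) ⬝ᵥ ξ := by
    rw [← sub_dotProduct, dotProduct_comm]; congr 1; module
  unfold wignerIntegrand fourierIntegrand
  rw [hy]
  generalize (x + (2 : ℝ)⁻¹ • y) ⬝ᵥ ξ = a
  generalize (x - (2 : ℝ)⁻¹ • y) ⬝ᵥ ξ = b
  have hexp : Complex.exp (-2 * Real.pi * Complex.I * ((a - b : ℝ) : ℂ)) =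
      (starRingEnd ℂ) (Complex.exp (-2 * Real.pi * Complex.I * (b : ℂ))) *
        Complex.exp (-2 * Real.pi * Complex.I * (a : ℂ)) := by
    rw [← Complex.exp_conj, ← Complex.exp_add]
    simp only [map_mul, map_neg, map_ofNat, Complex.conj_I, Complex.conj_ofReal]
    push_cast; ring_nf
  rw [hexp, map_mul]
  ring

variable {f : (Fin d → ℝ) → ℂ}

theorem integrable_wignerIntegrand (hf : Integrable f) (ξ : Fin d → ℝ) :
    Integrable (wignerIntegrand f ξ) (volume.prod volume) := by
  rw [funext (wignerIntegrand_eq_conj_mul f ξ)]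
  exact (measurePreserving_sub_half_smul_add_half_smul volume).integrable_comp_of_integrable
    (hf.fourierIntegrand ξ).conj_mul_prod

theorem integrable_wigner (hf : Integrable f) (ξ : Fin d → ℝ) :
    Integrable (fun x => wigner f x ξ) := by
  simpa only [wigner_eq_integral_wignerIntegrand] using
    (integrable_wignerIntegrand hf ξ).integral_prod_left

theorem integral_wigner (hf : Integrable f) (ξ : Fin d → ℝ) :
    ∫ x, wigner f x ξ = ((‖fourierT f ξ‖ ^ 2 : ℝ) : ℂ) := by
  have hΨ := measurePreserving_sub_half_smul_add_half_smul (volume : Measure (Fin d → ℝ))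
  have hH := (hf.fourierIntegrand ξ).conj_mul_prod
  have hmap := integral_map hΨ.measurable.aemeasurable (hΨ.map_eq ▸ hH.aestronglyMeasurable)
  rw [hΨ.map_eq] at hmap
  calc ∫ x, wigner f x ξ = ∫ x, ∫ y, wignerIntegrand f ξ (x, y) := by
        simp only [wigner_eq_integral_wignerIntegrand]
    _ = ∫ p, wignerIntegrand f ξ p ∂(volume.prod volume) :=
        (integral_prod _ (integrable_wignerIntegrand hf ξ)).symm
    _ = ∫ p : (Fin d → ℝ) × (Fin d → ℝ), (starRingEnd ℂ) (fourierIntegrand f ξ p.1) *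
          fourierIntegrand f ξ p.2 ∂(volume.prod volume) := by
        simp only [wignerIntegrand_eq_conj_mul, hmap]
    _ = (starRingEnd ℂ) (fourierT f ξ) * fourierT f ξ := by
        rw [integral_prod_mul (fun v => (starRingEnd ℂ) (fourierIntegrand f ξ v)),
          integral_conj]
        rfl
    _ = ((‖fourierT f ξ‖ ^ 2 : ℝ) : ℂ) := by
        rw [Complex.conj_mul']; push_cast; rfl

end Wigner

theorem nnnorm_ofReal_abs_mul_norm_sq_mul_ofReal_abs_inv {δ : ℝ} (hδ : δ ≠ 0) (z : ℂ) :
    (‖((|δ| * ‖z‖ ^ 2 : ℝ) : ℂ)‖₊ : ℝ≥0∞) * ENNReal.ofReal |δ|⁻¹ = (‖z‖₊ : ℝ≥0∞) ^ 2 := by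
  rw [Complex.nnnorm_real, ← enorm_eq_nnnorm, Real.enorm_eq_ofReal (by positivity),
    ENNReal.ofReal_mul (abs_nonneg _), mul_right_comm, ← ENNReal.ofReal_mul (abs_nonneg _),
    mul_inv_cancel₀ (abs_ne_zero.mpr hδ), ENNReal.ofReal_one, one_mul,
    ENNReal.ofReal_pow (norm_nonneg _), ofReal_norm, enorm_eq_nnnorm]

theorem wavelet_wigner_admissibility_eq_calderon_general
    (d : ℕ) (ψ : (Fin d → ℝ) → ℂ)
    (hψ1 : Integrable ψ (volume : Measure (Fin d → ℝ)))
    (D : Subgroup (Matrix.GeneralLinearGroup (Fin d) ℝ))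
    [MeasurableSpace ↥D]
    (da : Measure ↥D) :
    (∀ a : Matrix.GeneralLinearGroup (Fin d) ℝ, ∀ x ξ : Fin d → ℝ,
      Integrable
        (fun q : Fin d → ℝ =>
          wigner ψ (((↑(a⁻¹) : Matrix (Fin d) (Fin d) ℝ)).mulVec (x - q))
            (((↑a : Matrix (Fin d) (Fin d) ℝ))ᵀ.mulVec ξ))
        (volume : Measure (Fin d → ℝ)) ∧
      ∫ q : Fin d → ℝ,
          wigner ψ (((↑(a⁻¹) : Matrix (Fin d) (Fin d) ℝ)).mulVec (x - q))
            (((↑a : Matrix (Fin d) (Fin d) ℝ))ᵀ.mulVec ξ) =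
        ((|(↑a : Matrix (Fin d) (Fin d) ℝ).det| *
            ‖fourierT ψ (((↑a : Matrix (Fin d) (Fin d) ℝ))ᵀ.mulVec ξ)‖ ^ 2 : ℝ) : ℂ))
    ∧
    (∀ x ξ : Fin d → ℝ,
      ∫⁻ a : ↥D,
          (‖∫ q : Fin d → ℝ,
              wigner ψ
                (((↑((↑a : Matrix.GeneralLinearGroup (Fin d) ℝ)⁻¹) :
                    Matrix (Fin d) (Fin d) ℝ)).mulVec (x - q))
                (((↑(↑a : Matrix.GeneralLinearGroup (Fin d) ℝ) :
                    Matrix (Fin d) (Fin d) ℝ))ᵀ.mulVec ξ)‖₊ : ℝ≥0∞) *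
            ENNReal.ofReal
              (|(↑(↑a : Matrix.GeneralLinearGroup (Fin d) ℝ) :
                  Matrix (Fin d) (Fin d) ℝ).det|⁻¹) ∂da =
        ∫⁻ a : ↥D,
          (‖fourierT ψ
              (((↑(↑a : Matrix.GeneralLinearGroup (Fin d) ℝ) :
                  Matrix (Fin d) (Fin d) ℝ))ᵀ.mulVec ξ)‖₊ : ℝ≥0∞) ^ 2 ∂da) := by
  have hinner : ∀ (a : Matrix.GeneralLinearGroup (Fin d) ℝ) (x ξ : Fin d → ℝ),
      ∫ q, wigner ψ ((↑a⁻¹ : Matrix (Fin d) (Fin d) ℝ) *ᵥ (x - q))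
          ((↑a : Matrix (Fin d) (Fin d) ℝ)ᵀ *ᵥ ξ) =
        ((|(↑a : Matrix (Fin d) (Fin d) ℝ).det| *
          ‖fourierT ψ ((↑a : Matrix (Fin d) (Fin d) ℝ)ᵀ *ᵥ ξ)‖ ^ 2 : ℝ) : ℂ) := fun a x ξ => by
    rw [integral_comp_inv_mulVec_sub (fun u => wigner ψ u _), integral_wigner hψ1,
      Complex.real_smul, Complex.ofReal_mul]
  refine ⟨fun a x ξ => ⟨(integrable_wigner hψ1 _).comp_inv_mulVec_sub a x, hinner a x ξ⟩,
    fun x ξ => lintegral_congr fun a => ?_⟩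
  rw [hinner]
  exact nnnorm_ofReal_abs_mul_norm_sq_mul_ofReal_abs_inv
    (Matrix.GeneralLinearGroup.det_ne_zero _) _

/-- For `ψ ∈ L¹ ∩ L²`, the inner (translation) integral of the Wigner admissibility
integral of the wavelet group `ℝ^d ⋊ D` can be computed explicitly, and consequently the
Wigner admissibility integral coincides with the Calderón admissibility integral
`∫_D |ψ̂(ᵗa ξ)|² da`. -/
theorem wavelet_wigner_admissibility_eq_calderon
    (d : ℕ) (hd : 1 ≤ d) (ψ : (Fin d → ℝ) → ℂ)
    (hψ1 : Integrable ψ (volume : Measure (Fin d → ℝ)))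
    (hψ2 : MemLp ψ 2 (volume : Measure (Fin d → ℝ)))
    (D : Subgroup (Matrix.GeneralLinearGroup (Fin d) ℝ))
    (hD : IsClosed (D : Set (Matrix.GeneralLinearGroup (Fin d) ℝ)))
    [MeasurableSpace ↥D] [BorelSpace ↥D]
    (da : Measure ↥D) [da.IsHaarMeasure] :
    (∀ a : Matrix.GeneralLinearGroup (Fin d) ℝ, ∀ x ξ : Fin d → ℝ,
      Integrable
        (fun q : Fin d → ℝ =>
          wigner ψ (((↑(a⁻¹) : Matrix (Fin d) (Fin d) ℝ)).mulVec (x - q))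
            (((↑a : Matrix (Fin d) (Fin d) ℝ))ᵀ.mulVec ξ))
        (volume : Measure (Fin d → ℝ)) ∧
      ∫ q : Fin d → ℝ,
          wigner ψ (((↑(a⁻¹) : Matrix (Fin d) (Fin d) ℝ)).mulVec (x - q))
            (((↑a : Matrix (Fin d) (Fin d) ℝ))ᵀ.mulVec ξ) =
        ((|(↑a : Matrix (Fin d) (Fin d) ℝ).det| *
            ‖fourierT ψ (((↑a : Matrix (Fin d) (Fin d) ℝ))ᵀ.mulVec ξ)‖ ^ 2 : ℝ) : ℂ))
    ∧
    (∀ x ξ : Fin d → ℝ,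
      ∫⁻ a : ↥D,
          (‖∫ q : Fin d → ℝ,
              wigner ψ
                (((↑((↑a : Matrix.GeneralLinearGroup (Fin d) ℝ)⁻¹) :
                    Matrix (Fin d) (Fin d) ℝ)).mulVec (x - q))
                (((↑(↑a : Matrix.GeneralLinearGroup (Fin d) ℝ) :
                    Matrix (Fin d) (Fin d) ℝ))ᵀ.mulVec ξ)‖₊ : ℝ≥0∞) *
            ENNReal.ofReal
              (|(↑(↑a : Matrix.GeneralLinearGroup (Fin d) ℝ) :
                  Matrix (Fin d) (Fin d) ℝ).det|⁻¹) ∂da =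
        ∫⁻ a : ↥D,
          (‖fourierT ψ
              (((↑(↑a : Matrix.GeneralLinearGroup (Fin d) ℝ) :
                  Matrix (Fin d) (Fin d) ℝ))ᵀ.mulVec ξ)‖₊ : ℝ≥0∞) ^ 2 ∂da) :=
  wavelet_wigner_admissibility_eq_calderon_general d ψ hψ1 D da
end

section
/- Let Φ : ℝ^d → ℝ^d be a quadratic mapping (each component a real polynomial of degree at most 2) whose Jacobian determinant J_Φ does not vanish identically, let S = { x ∈ ℝ^d : J_Φ(x) = 0 }, and let X ⊂ Φ(ℝ^d) \ Φ(S) be an open subset of ℝ^d. Then the following are equivalent: (i) the cardinality of the fiber Φ^{−1}(y) is locally constant for y ∈ X; (ii) the restriction Φ : Φ^{−1}(X) → X is proper, i.e. for every compact set K ⊂ X the set Φ^{−1}(K) is compact. -/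
/-!
Over `X` the map `Φ` is a local homeomorphism (inverse function theorem), so around a finite fibre
`Φ⁻¹(y) = {x₁, …, xₙ}` there are disjoint open sheets `Uᵢ ∋ xᵢ`, each mapped injectively onto a
neighbourhood of `y`; every fibre near `y` meets the union of the sheets in exactly `n` points.

If `Φ` is proper over `X`, fibres are compact and discrete, hence finite, and the points of
`Φ⁻¹(K)` outside the sheets, for a compact neighbourhood `K` of `y`, form a compact set whose
image misses `y`: nearby fibres lie in the sheets and have exactly `n` points.

Conversely, `d + 1` polynomials in `d` variables are algebraically dependent, so each coordinate
`xᵢ` satisfies a nontrivial polynomial relation with `Φ(x)`, and the fibres of `Φ` are finite off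
the zero set of a nonzero polynomial, a dense set. A locally constant fibre cardinality is then
finite and positive, nearby fibres lie in relatively compact sheets, and `Φ⁻¹(K)` is covered by
finitely many compact sets.
-/

open Topology Filter Set

noncomputable def jacDet {d : ℕ} (Φ : (Fin d → ℝ) → (Fin d → ℝ)) (x : Fin d → ℝ) : ℝ :=
  LinearMap.det (fderiv ℝ Φ x).toLinearMap

namespace MvPolynomial

noncomputable def polyMap {σ ι R : Type*} [CommSemiring R] (p : ι → MvPolynomial σ R)
    (x : σ → R) : ι → R :=
  fun i => eval x (p i)

section Field

variable {K : Type*} [Field K] {n : ℕ}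

theorem exists_ne_zero_aeval_eq_zero (g : Fin (n + 1) → MvPolynomial (Fin n) K) :
    ∃ Q : MvPolynomial (Fin (n + 1)) K, Q ≠ 0 ∧ aeval g Q = 0 := by
  by_contra! h
  have hind : AlgebraicIndependent K g :=
    algebraicIndependent_iff.mpr fun Q hQ => by_contra fun hQ0 => h Q hQ0 hQ
  -- `n + 1` algebraically independent elements in an algebra of transcendence degree `n`
  simpa using hind.lift_cardinalMk_le_trdeg

theorem finite_setOf_eval_cons_eq_zero (Q : MvPolynomial (Fin (n + 1)) K) {y : Fin n → K}
    (hy : eval y (finSuccEquiv K n Q).leadingCoeff ≠ 0) :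
    {t : K | eval (Fin.cons t y) Q = 0}.Finite := by
  have hmap : (finSuccEquiv K n Q).map (eval y) ≠ 0 := fun h => hy <| by
    simpa [Polynomial.coeff_map] using congrArg (·.coeff (finSuccEquiv K n Q).natDegree) h
  refine (Polynomial.finite_setOfPred_isRoot hmap).subset fun t ht => ?_
  simpa [Polynomial.IsRoot, ← eval_eq_eval_mv_eval'] using ht

theorem exists_ne_zero_finite_fiber_polyMap (p : Fin n → MvPolynomial (Fin n) K) :
    ∃ q : MvPolynomial (Fin n) K, q ≠ 0 ∧
      ∀ y, eval y q ≠ 0 → (polyMap p ⁻¹' {y}).Finite := by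
  have hrel (i : Fin n) :=
    exists_ne_zero_aeval_eq_zero (Fin.cons (X i) p : Fin (n + 1) → MvPolynomial (Fin n) K)
  choose Q hQ0 hQ using hrel
  let c (i : Fin n) := (finSuccEquiv K n (Q i)).leadingCoeff
  refine ⟨∏ i, c i, Finset.prod_ne_zero_iff.mpr fun i _ => ?_, fun y hy => ?_⟩
  · exact Polynomial.leadingCoeff_ne_zero.mpr <|
      (EmbeddingLike.map_ne_zero_iff (f := finSuccEquiv K n)).mpr (hQ0 i)
  have hcy (i : Fin n) : eval y (c i) ≠ 0 := fun h =>
    hy (by rw [map_prod]; exact Finset.prod_eq_zero (Finset.mem_univ i) h)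
  refine (Set.Finite.pi fun i => finite_setOf_eval_cons_eq_zero (Q i) (hcy i)).subset ?_
  rintro x rfl i -
  have hcons : (fun j => eval x ((Fin.cons (X i) p : Fin (n + 1) → MvPolynomial (Fin n) K) j))
      = Fin.cons (x i) (polyMap p x) := by
    ext j; refine Fin.cases ?_ (fun k => ?_) j <;> simp [polyMap]
  have h := congrArg (aeval x) (hQ i)
  rw [aeval_eq_bind₁, aeval_bind₁, map_zero] at h
  simpa only [aeval_eq_eval, hcons, Set.mem_ofPred_eq] using h

end Field

variable {σ : Type*} [Fintype σ]

theorem dense_setOf_eval_ne_zero {q : MvPolynomial σ ℝ} (hq : q ≠ 0) :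
    Dense {y : σ → ℝ | eval y q ≠ 0} := by
  refine dense_iff_inter_open.mpr fun U hU ⟨y₀, hy₀⟩ => ?_
  by_contra! hzero
  refine hq (funext fun x => ?_)
  have hU0 : (eval · q) =ᶠ[𝓝 y₀] 0 := by
    filter_upwards [hU.mem_nhds hy₀] with y hy
    by_contra hne
    exact Set.eq_empty_iff_forall_notMem.mp hzero y ⟨hy, hne⟩
  simpa using (AnalyticOnNhd.eval_mvPolynomial q).eqOn_zero_of_preconnected_of_eventuallyEq_zero
    isPreconnected_univ (Set.mem_univ y₀) hU0 (Set.mem_univ x)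

theorem contDiff_polyMap {ι : Type*} [Fintype ι] (p : ι → MvPolynomial σ ℝ) {n : WithTop ℕ∞} :
    ContDiff ℝ n (polyMap p) :=
  contDiff_pi.mpr fun i => (AnalyticOnNhd.eval_mvPolynomial (p i)).contDiff

end MvPolynomial

theorem isLocalHomeomorphOn_of_jacDet_ne_zero {d : ℕ} {Φ : (Fin d → ℝ) → (Fin d → ℝ)}
    (hΦ : ContDiff ℝ 1 Φ) {s : Set (Fin d → ℝ)} (hs : ∀ x ∈ s, jacDet Φ x ≠ 0) :
    IsLocalHomeomorphOn Φ s := by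
  intro x hx
  let L := (LinearMap.equivOfDetNeZero _ (hs x hx)).toContinuousLinearEquiv
  have hL : HasStrictFDerivAt Φ (L : (Fin d → ℝ) →L[ℝ] (Fin d → ℝ)) x :=
    hΦ.contDiffAt.hasStrictFDerivAt one_ne_zero
  exact ⟨hL.toOpenPartialHomeomorph Φ, hL.mem_toOpenPartialHomeomorph_source,
    hL.toOpenPartialHomeomorph_coe.symm⟩

section Fibres

variable {α β : Type*} {Φ : α → β}

theorem ncard_preimage_inter_biUnion_eq {F : Set α} {U : α → Set α}
    (hinj : ∀ x ∈ F, InjOn Φ (U x)) (hdisj : F.PairwiseDisjoint U) {y : β}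
    (hy : ∀ x ∈ F, y ∈ Φ '' U x) :
    (Φ ⁻¹' {y} ∩ ⋃ x ∈ F, U x).ncard = F.ncard := by
  choose z hzU hz using hy
  symm
  refine ncard_congr z (fun x hx => ⟨hz x hx, mem_biUnion hx (hzU x hx)⟩) ?_ ?_
  · intro a b ha hb hab
    exact hdisj.elim ha hb (not_disjoint_iff.mpr ⟨_, hzU a ha, hab ▸ hzU b hb⟩)
  · rintro w ⟨hw, hwU⟩
    obtain ⟨x, hx, hwx⟩ := mem_iUnion₂.mp hwU
    exact ⟨x, hx, hinj x hx (hzU x hx) hwx ((hz x hx).trans hw.symm)⟩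

variable [TopologicalSpace β]

theorem eventually_nhds_iff_exists_isOpen_subset {X : Set β} (hX : IsOpen X) {y : β}
    (hy : y ∈ X) {p : β → Prop} :
    (∀ᶠ y' in 𝓝 y, p y') ↔ ∃ U, IsOpen U ∧ y ∈ U ∧ U ⊆ X ∧ ∀ y' ∈ U, p y' := by
  refine ⟨fun h => ?_, fun ⟨U, hU, hyU, _, hp⟩ => eventually_of_mem (hU.mem_nhds hyU) hp⟩
  obtain ⟨U, hUp, hU, hyU⟩ := eventually_nhds_iff.mp h
  exact ⟨U ∩ X, hU.inter hX, ⟨hyU, hy⟩, inter_subset_right, fun y' hy' => hUp y' hy'.1⟩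

theorem finite_fiber_of_eventually_ncard_eq (hdense : Dense {y | (Φ ⁻¹' {y}).Finite}) {y : β}
    (hne : ∀ᶠ y' in 𝓝 y, (Φ ⁻¹' {y'}).Nonempty)
    (hcard : ∀ᶠ y' in 𝓝 y, (Φ ⁻¹' {y'}).ncard = (Φ ⁻¹' {y}).ncard) :
    (Φ ⁻¹' {y}).Finite := by
  obtain ⟨y', ⟨hne', hcard'⟩, hfin'⟩ :=
    ((hne.and hcard).and_frequently (mem_closure_iff_frequently.mp (hdense y))).exists
  exact finite_of_ncard_pos (hcard' ▸ (ncard_pos hfin').mpr hne')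

variable [TopologicalSpace α]

theorem IsLocalHomeomorphOn.exists_isOpen_injOn_isOpen_image {s : Set α}
    (hΦ : IsLocalHomeomorphOn Φ s) {x : α} (hx : x ∈ s) {N : Set α} (hN : N ∈ 𝓝 x) :
    ∃ W ⊆ N, IsOpen W ∧ x ∈ W ∧ InjOn Φ W ∧ IsOpen (Φ '' W) := by
  obtain ⟨e, hxe, rfl⟩ := hΦ x hx
  have hW : IsOpen (interior N ∩ e.source) := isOpen_interior.inter e.open_source
  exact ⟨_, inter_subset_left.trans interior_subset, hW,
    ⟨mem_interior_iff_mem_nhds.mpr hN, hxe⟩, e.injOn.mono inter_subset_right,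
    e.isOpen_image_of_subset_source hW inter_subset_right⟩

theorem IsLocalHomeomorphOn.exists_sheets [T2Space α] {F : Set α} (hF : F.Finite)
    (hΦ : IsLocalHomeomorphOn Φ F) {y : β} (hFy : F ⊆ Φ ⁻¹' {y}) {N : α → Set α}
    (hN : ∀ x ∈ F, N x ∈ 𝓝 x) :
    ∃ U : α → Set α, (∀ x ∈ F, IsOpen (U x) ∧ x ∈ U x ∧ U x ⊆ N x ∧ InjOn Φ (U x)) ∧
      F.PairwiseDisjoint U ∧ ∀ᶠ y' in 𝓝 y, ∀ x ∈ F, y' ∈ Φ '' U x := by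
  obtain ⟨V, hV, hVdisj⟩ := hF.t2_separation
  have hsheet (x) (hx : x ∈ F) := hΦ.exists_isOpen_injOn_isOpen_image hx
    (inter_mem ((hV x).2.mem_nhds (hV x).1) (hN x hx))
  choose! U hUVN hU hxU hinj hUim using hsheet
  refine ⟨U, fun x hx => ⟨hU x hx, hxU x hx, (hUVN x hx).trans inter_subset_right, hinj x hx⟩,
    fun x hx x' hx' hne => (hVdisj hx hx' hne).mono (hUVN x hx |>.trans inter_subset_left)
      (hUVN x' hx' |>.trans inter_subset_left), ?_⟩
  refine (eventually_all_finite hF).mpr fun x hx => (hUim x hx).mem_nhds ?_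
  exact ⟨x, hxU x hx, hFy hx⟩

theorem IsLocalHomeomorphOn.eventually_ncard_fiber_eq [T2Space α] [T2Space β]
    [LocallyCompactSpace β] (hcont : Continuous Φ) {X : Set β} (hX : IsOpen X)
    (hΦ : IsLocalHomeomorphOn Φ (Φ ⁻¹' X))
    (hproper : ∀ K ⊆ X, IsCompact K → IsCompact (Φ ⁻¹' K)) {y : β} (hy : y ∈ X) :
    ∀ᶠ y' in 𝓝 y, (Φ ⁻¹' {y'}).ncard = (Φ ⁻¹' {y}).ncard := by
  have hyX : Φ ⁻¹' {y} ⊆ Φ ⁻¹' X := preimage_mono (singleton_subset_iff.mpr hy)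
  have hfin : (Φ ⁻¹' {y}).Finite :=
    (hproper {y} (singleton_subset_iff.mpr hy) isCompact_singleton).finite <|
      (hΦ.mono hyX).isDiscrete_of_image
        (subsingleton_singleton.anti (image_preimage_subset _ _)).isDiscrete
  obtain ⟨U, hU, hdisj, hsheets⟩ :=
    (hΦ.mono hyX).exists_sheets hfin subset_rfl (N := fun _ => univ) fun _ _ => univ_mem
  obtain ⟨K, hKy, hKX, hK⟩ := local_compact_nhds (hX.mem_nhds hy)
  set C := Φ ⁻¹' K \ ⋃ x ∈ Φ ⁻¹' {y}, U x
  have hC : IsCompact C :=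
    (hproper K hKX hK).diff (isOpen_biUnion fun x hx => (hU x hx).1)
  have hyC : y ∉ Φ '' C := fun ⟨x, hxC, hxy⟩ => hxC.2 (mem_biUnion hxy (hU x hxy).2.1)
  filter_upwards [hKy, (hC.image hcont).isClosed.compl_mem_nhds hyC, hsheets]
    with y' hy'K hy'C hy'U
  rw [← ncard_preimage_inter_biUnion_eq (fun x hx => (hU x hx).2.2.2) hdisj hy'U,
    inter_eq_left.mpr]
  intro x (hx : Φ x = y')
  by_contra hxU
  exact hy'C ⟨x, ⟨by rwa [mem_preimage, hx], hxU⟩, hx⟩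

theorem IsLocalHomeomorphOn.exists_nhds_preimage_subset_isCompact [T2Space α]
    [WeaklyLocallyCompactSpace α] {y : β} (hΦ : IsLocalHomeomorphOn Φ (Φ ⁻¹' {y}))
    (hfin : (Φ ⁻¹' {y}).Finite) (hne : (Φ ⁻¹' {y}).Nonempty)
    (hcard : ∀ᶠ y' in 𝓝 y, (Φ ⁻¹' {y'}).ncard = (Φ ⁻¹' {y}).ncard) :
    ∃ T ∈ 𝓝 y, ∃ C, IsCompact C ∧ Φ ⁻¹' T ⊆ C := by
  choose N hNc hN using exists_compact_mem_nhds (X := α)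
  obtain ⟨U, hU, hdisj, hsheets⟩ := hΦ.exists_sheets hfin subset_rfl fun x _ => hN x
  refine ⟨_, hcard.and hsheets, ⋃ x ∈ Φ ⁻¹' {y}, N x,
    hfin.isCompact_biUnion fun x _ => hNc x, fun x ⟨hxcard, hxU⟩ => ?_⟩
  have hcount := ncard_preimage_inter_biUnion_eq (fun x hx => (hU x hx).2.2.2) hdisj hxU
  have hfiber : Φ ⁻¹' {Φ x} ∩ ⋃ x' ∈ Φ ⁻¹' {y}, U x' = Φ ⁻¹' {Φ x} :=
    eq_of_subset_of_ncard_le inter_subset_left (by rw [hcount, hxcard])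
      (finite_of_ncard_pos (hxcard ▸ (ncard_pos hfin).mpr hne))
  have hx : x ∈ Φ ⁻¹' {Φ x} ∩ ⋃ x' ∈ Φ ⁻¹' {y}, U x' := by
    rw [hfiber]; exact rfl
  obtain ⟨x', hx', hxU'⟩ := mem_iUnion₂.mp hx.2
  exact mem_biUnion hx' ((hU x' hx').2.2.1 hxU')

theorem isCompact_preimage_of_forall_nhds_preimage_subset_isCompact [T2Space β]
    (hcont : Continuous Φ) {X : Set β}
    (h : ∀ y ∈ X, ∃ T ∈ 𝓝 y, ∃ C, IsCompact C ∧ Φ ⁻¹' T ⊆ C)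
    {K : Set β} (hKX : K ⊆ X) (hK : IsCompact K) : IsCompact (Φ ⁻¹' K) := by
  choose T hT C hC hTC using h
  obtain ⟨t, ht⟩ := hK.elim_nhds_subcover' (fun y hy => T y (hKX hy)) fun y hy => hT y (hKX hy)
  refine (t.finite_toSet.isCompact_biUnion fun y _ => hC y (hKX y.2)).of_isClosed_subset
    (hK.isClosed.preimage hcont) fun x hx => ?_
  obtain ⟨y, hyt, hxT⟩ := mem_iUnion₂.mp (ht hx)
  exact mem_biUnion hyt (hTC _ _ hxT)

end Fibres

open MvPolynomial in
theorem locally_constant_fibers_iff_proper_general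
    (d : ℕ) (Φ : (Fin d → ℝ) → (Fin d → ℝ))
    (hpoly : ∀ i : Fin d, ∃ p : MvPolynomial (Fin d) ℝ,
      p.totalDegree ≤ 2 ∧ ∀ x : Fin d → ℝ, Φ x i = MvPolynomial.eval x p)
    (S : Set (Fin d → ℝ)) (hS : S = {x : Fin d → ℝ | jacDet Φ x = 0})
    (X : Set (Fin d → ℝ)) (hXopen : IsOpen X)
    (hX : X ⊆ Set.range Φ \ (Φ '' S)) :
    ((∀ y ∈ X, ∃ U : Set (Fin d → ℝ), IsOpen U ∧ y ∈ U ∧ U ⊆ X ∧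
        ∀ y' ∈ U, Nat.card (Φ ⁻¹' {y'}) = Nat.card (Φ ⁻¹' {y}))
      ↔
      (∀ K : Set (Fin d → ℝ), K ⊆ X → IsCompact K → IsCompact (Φ ⁻¹' K))) := by
  choose p _ hp using hpoly
  obtain rfl : Φ = polyMap p := funext fun x => funext fun i => hp i x
  have hcont : Continuous (polyMap p) := (contDiff_polyMap p (n := 0)).continuous
  have hloc : IsLocalHomeomorphOn (polyMap p) (polyMap p ⁻¹' X) :=
    isLocalHomeomorphOn_of_jacDet_ne_zero (contDiff_polyMap p) fun x hx hJ =>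
      (hX hx).2 ⟨x, hS ▸ hJ, rfl⟩
  have hnonempty (y) (hy : y ∈ X) : (polyMap p ⁻¹' {y}).Nonempty := (hX hy).1
  simp only [Nat.card_coe_set_eq]
  refine ⟨fun hloccard K => ?_, fun hproper y hy => ?_⟩
  · obtain ⟨q, hq, hqfin⟩ := exists_ne_zero_finite_fiber_polyMap p
    have hdense := (dense_setOf_eval_ne_zero hq).mono hqfin
    refine isCompact_preimage_of_forall_nhds_preimage_subset_isCompact hcont fun y hy => ?_
    have hcard := (eventually_nhds_iff_exists_isOpen_subset hXopen hy).mpr (hloccard y hy)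
    have hfin := finite_fiber_of_eventually_ncard_eq hdense
      (eventually_of_mem (hXopen.mem_nhds hy) hnonempty) hcard
    have hlocy := hloc.mono (preimage_mono (singleton_subset_iff.mpr hy))
    exact hlocy.exists_nhds_preimage_subset_isCompact hfin (hnonempty y hy) hcard
  · exact (eventually_nhds_iff_exists_isOpen_subset hXopen hy).mp
      (hloc.eventually_ncard_fiber_eq hcont hXopen hproper hy)

/-- For a quadratic map `Φ : ℝ^d → ℝ^d` with not identically vanishing Jacobian,
and an open set `X ⊆ Φ(ℝ^d) \ Φ(S)` (where `S` is the critical set),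
local constancy of the fiber cardinality over `X` is equivalent to properness of
the restriction `Φ : Φ⁻¹(X) → X`. -/
theorem locally_constant_fibers_iff_proper
    (d : ℕ) (hd : 1 ≤ d) (Φ : (Fin d → ℝ) → (Fin d → ℝ))
    (hpoly : ∀ i : Fin d, ∃ p : MvPolynomial (Fin d) ℝ,
      p.totalDegree ≤ 2 ∧ ∀ x : Fin d → ℝ, Φ x i = MvPolynomial.eval x p)
    (hne : ∃ x : Fin d → ℝ, jacDet Φ x ≠ 0)
    (S : Set (Fin d → ℝ)) (hS : S = {x : Fin d → ℝ | jacDet Φ x = 0})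
    (X : Set (Fin d → ℝ)) (hXopen : IsOpen X)
    (hX : X ⊆ Set.range Φ \ (Φ '' S)) :
    ((∀ y ∈ X, ∃ U : Set (Fin d → ℝ), IsOpen U ∧ y ∈ U ∧ U ⊆ X ∧
        ∀ y' ∈ U, Nat.card (Φ ⁻¹' {y'}) = Nat.card (Φ ⁻¹' {y}))
      ↔
      (∀ K : Set (Fin d → ℝ), K ⊆ X → IsCompact K → IsCompact (Φ ⁻¹' K))) :=
  locally_constant_fibers_iff_proper_general d Φ hpoly S hS X hXopen hX
end

section
/- Let φ₁ ∈ L²(ℝ) satisfy ∫_0^∞ |φ₁(x)|² x^{−2} dx = ∫_0^∞ |φ₁(−x)|² x^{−2} dx = 1/2 and ∫_0^∞ φ₁(x) conj(φ₁(−x)) x^{−2} dx = 0. Define ψ(u,v) = 2 φ₁(u) φ₁(v) for (u,v) ∈ ℝ². Then ψ satisfies the TDW admissibility conditions: with Y₁ = (0,∞) × (0,∞), ∫_{Y₁} |ψ(u,v)|² u^{−2} v^{−2} du dv = 1, ∫_{Y₁} |ψ(−u,−v)|² u^{−2} v^{−2} du dv = 1, and ∫_{Y₁} ψ(−u,−v)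 conj(ψ(u,v)) u^{−2} v^{−2} du dv = 0. Hence a reproducing function for the TDW group is obtained as a tensor product of two one-dimensional wavelets. -/
open MeasureTheory Real Complex Topology
open scoped ENNReal

/-- The first quadrant `Y₁ = (0,∞) × (0,∞)`. -/
def Y1TDW : Set (ℝ × ℝ) := Set.Ioi (0 : ℝ) ×ˢ Set.Ioi (0 : ℝ)

/-! Every integrand in the TDW conditions for `ψ(u,v) = 2 φ₁(u) φ₁(v)` splits as `F u * F v`,
so by Fubini its integral over `Y₁` is `(∫_{(0,∞)} F)²`, and `∫_{(0,∞)} F` is twice a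
one-dimensional admissibility integral: `2 · 1/2 = 1`, or `2 · 0 = 0` for the cross term after
complex conjugation. -/

theorem setIntegral_Y1TDW_mul {𝕜 : Type*} [RCLike 𝕜] (f g : ℝ → 𝕜) :
    ∫ p in Y1TDW, f p.1 * g p.2 = (∫ x in Set.Ioi 0, f x) * ∫ y in Set.Ioi 0, g y := by
  rw [Y1TDW, Measure.volume_eq_prod]
  exact setIntegral_prod_mul f g _ _

theorem setIntegral_Y1TDW_norm_sq_tensor (φ : ℝ → ℂ)
    (hφ : ∫ x in Set.Ioi (0 : ℝ), ‖φ x‖ ^ 2 / x ^ 2 = 1 / 2) :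
    ∫ p in Y1TDW, ‖2 * φ p.1 * φ p.2‖ ^ 2 / (p.1 ^ 2 * p.2 ^ 2) = 1 := by
  set F : ℝ → ℝ := fun x => 2 * (‖φ x‖ ^ 2 / x ^ 2)
  have hsplit : (fun p : ℝ × ℝ => ‖2 * φ p.1 * φ p.2‖ ^ 2 / (p.1 ^ 2 * p.2 ^ 2))
      = fun p => F p.1 * F p.2 := by
    funext p
    simp only [F, norm_mul, mul_pow, Complex.norm_ofNat]
    ring
  rw [hsplit, setIntegral_Y1TDW_mul, integral_const_mul, hφ]
  norm_num

theorem setIntegral_Y1TDW_cross_tensor (φ : ℝ → ℂ)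
    (hφ : ∫ x in Set.Ioi (0 : ℝ), φ x * (starRingEnd ℂ) (φ (-x)) * (((x ^ 2)⁻¹ : ℝ) : ℂ) = 0) :
    ∫ p in Y1TDW, 2 * φ (-p.1) * φ (-p.2) * (starRingEnd ℂ) (2 * φ p.1 * φ p.2) *
      (((p.1 ^ 2 * p.2 ^ 2)⁻¹ : ℝ) : ℂ) = 0 := by
  set F : ℝ → ℂ := fun x => 2 * (φ (-x) * (starRingEnd ℂ) (φ x) * (((x ^ 2)⁻¹ : ℝ) : ℂ))
  have hsplit : (fun p : ℝ × ℝ => 2 * φ (-p.1) * φ (-p.2) * (starRingEnd ℂ) (2 * φ p.1 * φ p.2) *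
      (((p.1 ^ 2 * p.2 ^ 2)⁻¹ : ℝ) : ℂ)) = fun p => F p.1 * F p.2 := by
    funext p
    simp only [F, map_mul, map_ofNat, mul_inv]
    push_cast
    ring
  have hF : ∫ x in Set.Ioi (0 : ℝ), F x = 0 := by
    have hconj : ∫ x in Set.Ioi (0 : ℝ), φ (-x) * (starRingEnd ℂ) (φ x) * (((x ^ 2)⁻¹ : ℝ) : ℂ)
        = (starRingEnd ℂ)
            (∫ x in Set.Ioi (0 : ℝ), φ x * (starRingEnd ℂ) (φ (-x)) * (((x ^ 2)⁻¹ : ℝ) : ℂ)) := by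
      rw [← integral_conj]
      congr 1
      funext x
      simp only [map_mul, Complex.conj_conj, Complex.conj_ofReal]
      ring
    rw [integral_const_mul, hconj, hφ, map_zero, mul_zero]
  rw [hsplit, setIntegral_Y1TDW_mul, hF, zero_mul]

theorem tdw_tensor_wavelet_general
    (φ₁ : ℝ → ℂ)
    (h1 : ∫ x in Set.Ioi (0 : ℝ), ‖φ₁ x‖ ^ 2 / x ^ 2 = 1 / 2)
    (h2 : ∫ x in Set.Ioi (0 : ℝ), ‖φ₁ (-x)‖ ^ 2 / x ^ 2 = 1 / 2)
    (h3 : ∫ x in Set.Ioi (0 : ℝ), φ₁ x * (starRingEnd ℂ) (φ₁ (-x)) * (((x ^ 2)⁻¹ : ℝ) : ℂ)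
        = 0)
    (ψ : ℝ × ℝ → ℂ) (hψ : ψ = fun p : ℝ × ℝ => 2 * φ₁ p.1 * φ₁ p.2) :
    (∫ p in Y1TDW, ‖ψ p‖ ^ 2 / (p.1 ^ 2 * p.2 ^ 2) = 1) ∧
    (∫ p in Y1TDW, ‖ψ (-p)‖ ^ 2 / (p.1 ^ 2 * p.2 ^ 2) = 1) ∧
    (∫ p in Y1TDW,
        ψ (-p) * (starRingEnd ℂ) (ψ p) * (((p.1 ^ 2 * p.2 ^ 2)⁻¹ : ℝ) : ℂ) = 0) := by
  subst hψ
  exact ⟨setIntegral_Y1TDW_norm_sq_tensor φ₁ h1,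
    setIntegral_Y1TDW_norm_sq_tensor (fun x => φ₁ (-x)) h2,
    setIntegral_Y1TDW_cross_tensor φ₁ h3⟩

/-- A tensor product of two one-dimensional wavelets yields a reproducing function for
the TDW group: if `φ₁ ∈ L²(ℝ)` satisfies the one-dimensional admissibility conditions,
then `ψ(u,v) = 2 φ₁(u) φ₁(v)` satisfies the TDW admissibility conditions. -/
theorem tdw_tensor_wavelet
    (φ₁ : ℝ → ℂ) (hφ₁ : MemLp φ₁ 2 (volume : Measure ℝ))
    (h1 : ∫ x in Set.Ioi (0 : ℝ), ‖φ₁ x‖ ^ 2 / x ^ 2 = 1 / 2)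
    (h2 : ∫ x in Set.Ioi (0 : ℝ), ‖φ₁ (-x)‖ ^ 2 / x ^ 2 = 1 / 2)
    (h3 : ∫ x in Set.Ioi (0 : ℝ), φ₁ x * (starRingEnd ℂ) (φ₁ (-x)) * (((x ^ 2)⁻¹ : ℝ) : ℂ)
        = 0)
    (ψ : ℝ × ℝ → ℂ) (hψ : ψ = fun p : ℝ × ℝ => 2 * φ₁ p.1 * φ₁ p.2) :
    (∫ p in Y1TDW, ‖ψ p‖ ^ 2 / (p.1 ^ 2 * p.2 ^ 2) = 1) ∧
    (∫ p in Y1TDW, ‖ψ (-p)‖ ^ 2 / (p.1 ^ 2 * p.2 ^ 2) = 1) ∧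
    (∫ p in Y1TDW,
        ψ (-p) * (starRingEnd ℂ) (ψ p) * (((p.1 ^ 2 * p.2 ^ 2)⁻¹ : ℝ) : ℂ) = 0) :=
  tdw_tensor_wavelet_general φ₁ h1 h2 h3 ψ hψ
end
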